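/- With the notation of the band-matrix setup, assume in addition that p_M(i) ≠ 0 and p_M(−i) ≠ 0. Then b_{r−(2M+k₀−k₀◊)}^{r} ≠ 0 for every integer r ≥ 2M + k₀ + max(−k₀◊, 0). -/

import Mathlib

/-
Everything in sight is built from `W a b x = (x + i)^a (x - i)^b`, which multiply by adding
exponents, and by Leibniz the `m`-th derivative of `W a b` is a combination of the
`W (a - j) (b - m + j)`. Hence `b_m^n` is a finite combination of integrals `∫ q(x) W a b x` with
`q` a polynomial and `deg q + a + b ≤ -2`. Expanding `q` in powers of `x + i` (or `x - i`), such an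
integral vanishes as soon as `a ≥ 0` or `b ≥ 0`: the recursion `W (a+1) b = W a (b+1) + 2i W a b`
reduces it to `∫ (x ± i)^c dx = 0` for `c ≤ -2`. The only other integrals that occur are the
residues `∫ q W (-1) (-1-E) = π (-2i)^(-E) q(-i)` and `∫ q W (-1-E) (-1) = π (2i)^(-E) q(i)`.
On the extreme diagonal the parity of `r + k₀` decides which survives: for `r + k₀` even only the
term with all `M` derivatives on `(x + i)` remains, a nonzero multiple of `p_M(-i)`; for `r + k₀`
odd only the term with all of them on `(x - i)`, a nonzero multiple of `p_M(i)`.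
-/

open MeasureTheory

/-- The wavepacket basis function `ψ_{k,n}(x) = (x+i)^{-(k+1)} ((x-i)/(x+i))^n`. -/
noncomputable def psi (k n : ℤ) : ℝ → ℂ := fun x =>
  ((x : ℂ) + Complex.I) ^ (-(k + 1)) * (((x : ℂ) - Complex.I) / ((x : ℂ) + Complex.I)) ^ n

/-- The sorting index `ñ(k, n) = ⌊-(k+1)/2⌋ + (-1)^{n+k+1} ⌊(n+1)/2⌋`. -/
noncomputable def ntilde (k : ℤ) (n : ℕ) : ℤ :=
  ⌊(-(k : ℚ) - 1) / 2⌋ + (if Even ((n : ℤ) + k + 1) then 1 else -1) * ⌊((n : ℚ) + 1) / 2⌋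

/-- The sorted basis function `e^{(k)}_n = π^{-1/2} ψ_{k, ñ(k,n)}`. -/
noncomputable def ebasis (k : ℤ) (n : ℕ) : ℝ → ℂ := fun x =>
  (((Real.sqrt Real.pi)⁻¹ : ℝ) : ℂ) * psi k (ntilde k n) x

/-- `s₀ = max_{0 ≤ m ≤ M} (deg p_m - m)`. -/
noncomputable def s0 (M : ℕ) (p : ℕ → Polynomial ℂ) : ℤ :=
  Finset.sup' (Finset.range (M + 1)) Finset.nonempty_range_add_one
    fun m => ((p m).natDegree : ℤ) - (m : ℤ)

/-- The differential operator `(P f)(x) = Σ_{m=0}^{M} p_m(x) f^{(m)}(x)`. -/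
noncomputable def Pop (M : ℕ) (p : ℕ → Polynomial ℂ) (f : ℝ → ℂ) : ℝ → ℂ := fun x =>
  ∑ m ∈ Finset.range (M + 1), (p m).eval (x : ℂ) * deriv^[m] f x

/-- The band matrix `b_m^n = ∫ (P e_n)(x) conj(e◊_m(x)) (x²+1)^{k₀◊} dx`, where
`e_n = e^{(k₀)}_n` and `e◊_m = e^{(k₀◊)}_m`. -/
noncomputable def bmat (M : ℕ) (p : ℕ → Polynomial ℂ) (k₀ kd : ℤ) (m n : ℕ) : ℂ :=
  ∫ x : ℝ, Pop M p (ebasis k₀ n) x * (starRingEnd ℂ) (ebasis kd m x) *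
    ((((x ^ 2 + 1) ^ kd : ℝ)) : ℂ)

/-- The weighted measure `(x² + 1)^k dx` on `ℝ`. -/
noncomputable def wMeasure (k : ℤ) : Measure ℝ :=
  volume.withDensity fun x => ENNReal.ofReal ((x ^ 2 + 1) ^ k)

open Complex Filter Finset Polynomial Real Topology
open scoped ComplexConjugate

noncomputable def W (a b : ℤ) : ℝ → ℂ := fun x => ((x : ℂ) + I) ^ a * ((x : ℂ) - I) ^ b

lemma ofReal_add_ne_zero {c : ℂ} (hc : c.im ≠ 0) (x : ℝ) : (x : ℂ) + c ≠ 0 := fun h =>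
  hc (by simpa using congrArg im h)

lemma ofReal_add_I_ne_zero (x : ℝ) : (x : ℂ) + I ≠ 0 :=
  ofReal_add_ne_zero (by simp) x

lemma ofReal_sub_I_ne_zero (x : ℝ) : (x : ℂ) - I ≠ 0 := by
  simpa [sub_eq_add_neg] using ofReal_add_ne_zero (c := -I) (by simp) x

lemma hasDerivAt_ofReal_add_zpow {c : ℂ} (hc : c.im ≠ 0) (a : ℤ) (x : ℝ) :
    HasDerivAt (fun y : ℝ => ((y : ℂ) + c) ^ a) (a * ((x : ℂ) + c) ^ (a - 1)) x := by
  simpa using ((hasDerivAt_zpow a _ (.inl (ofReal_add_ne_zero hc x))).comp (x : ℂ)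
    ((hasDerivAt_id _).add_const c)).comp_ofReal

lemma iteratedDeriv_ofReal_add_zpow {c : ℂ} (hc : c.im ≠ 0) (a : ℤ) (j : ℕ) :
    iteratedDeriv j (fun y : ℝ => ((y : ℂ) + c) ^ a) =
      fun x : ℝ => (∏ i ∈ range j, ((a : ℂ) - i)) * ((x : ℂ) + c) ^ (a - j) := by
  induction j with
  | zero => simp
  | succ j ih =>
    ext x
    rw [iteratedDeriv_succ, ih, ((hasDerivAt_ofReal_add_zpow hc _ x).const_mul _).deriv,
      prod_range_succ, Nat.cast_succ, sub_add_eq_sub_sub, mul_assoc, Int.cast_sub, Int.cast_natCast]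

lemma contDiff_ofReal_add_zpow {c : ℂ} (hc : c.im ≠ 0) (a : ℤ) {n : ℕ∞} :
    ContDiff ℝ n (fun y : ℝ => ((y : ℂ) + c) ^ a) :=
  contDiff_of_differentiable_iteratedDeriv fun j _ => by
    rw [iteratedDeriv_ofReal_add_zpow hc]
    exact fun x => ((hasDerivAt_ofReal_add_zpow hc _ x).const_mul _).differentiableAt

lemma W_eq_mul (a b : ℤ) :
    W a b = (fun y : ℝ => ((y : ℂ) + I) ^ a) * fun y : ℝ => ((y : ℂ) + -I) ^ b := by
  ext; simp [W, sub_eq_add_neg]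

lemma contDiff_W (a b : ℤ) {n : ℕ∞} : ContDiff ℝ n (W a b) := by
  rw [W_eq_mul]
  exact (contDiff_ofReal_add_zpow (by simp) a).mul (contDiff_ofReal_add_zpow (by simp) b)

lemma norm_ofReal_add_I (x : ℝ) : ‖(x : ℂ) + I‖ = √(1 + x ^ 2) := by
  simpa [add_comm (1 : ℝ)] using norm_add_mul_I x 1

lemma norm_ofReal_sub_I (x : ℝ) : ‖(x : ℂ) - I‖ = ‖(x : ℂ) + I‖ := by
  rw [← norm_conj]; simp [sub_eq_add_neg]

lemma W_mul_W (a b c d : ℤ) (x : ℝ) : W a b x * W c d x = W (a + c) (b + d) x := by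
  simp only [W, zpow_add₀ (ofReal_add_I_ne_zero x), zpow_add₀ (ofReal_sub_I_ne_zero x)]
  exact mul_mul_mul_comm _ _ _ _

lemma conj_W (a b : ℤ) (x : ℝ) : conj (W a b x) = W b a x := by
  simp only [W, map_mul, map_zpow₀, map_add, map_sub, conj_ofReal, conj_I, sub_neg_eq_add]
  rw [mul_comm, sub_eq_add_neg]

lemma ofReal_one_add_sq_zpow (k : ℤ) (x : ℝ) : (((1 + x ^ 2) ^ k : ℝ) : ℂ) = W k k x := by
  rw [W, ← mul_zpow, ofReal_zpow]
  congr 1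
  push_cast
  ring_nf
  rw [I_sq]
  ring

lemma norm_W (a b : ℤ) (x : ℝ) : ‖W a b x‖ = √(1 + x ^ 2) ^ (a + b) := by
  rw [W, norm_mul, norm_zpow, norm_zpow, norm_ofReal_sub_I, norm_ofReal_add_I,
    zpow_add₀ (by positivity)]

lemma integrable_W {a b : ℤ} (hab : a + b ≤ -2) : Integrable (W a b) := by
  refine integrable_inv_one_add_sq.mono' (contDiff_W a b (n := 0)).continuous.aestronglyMeasurable
    (Eventually.of_forall fun x => ?_)
  have h1 : 1 ≤ √(1 + x ^ 2) := Real.one_le_sqrt.mpr (by nlinarith)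
  calc ‖W a b x‖ ≤ √(1 + x ^ 2) ^ (-2 : ℤ) := norm_W a b x ▸ zpow_le_zpow_right₀ h1 hab
    _ = (1 + x ^ 2)⁻¹ := by rw [zpow_neg, zpow_two, Real.mul_self_sqrt (by positivity)]

lemma tendsto_norm_ofReal_add_I :
    Tendsto (fun x : ℝ => ‖(x : ℂ) + I‖) (atBot ⊔ atTop) atTop := by
  refine tendsto_atTop_mono (fun x => ?_) (tendsto_abs_atBot_atTop.sup tendsto_abs_atTop_atTop)
  rw [norm_ofReal_add_I, ← Real.sqrt_sq_eq_abs]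
  exact Real.sqrt_le_sqrt (by nlinarith)

lemma integral_W_zero_right {a : ℤ} (ha : a ≤ -2) : ∫ x, W a 0 x = 0 := by
  have hderiv (x : ℝ) :
      HasDerivAt (fun y : ℝ => ((y : ℂ) + I) ^ (a + 1) / (a + 1)) (W a 0 x) x := by
    refine ((hasDerivAt_ofReal_add_zpow (c := I) (by simp) (a + 1) x).div_const
      ((a : ℂ) + 1)).congr_deriv ?_
    have : (a : ℂ) + 1 ≠ 0 := by exact_mod_cast (by omega : a + 1 ≠ 0)
    simp only [W, zpow_zero, mul_one, add_sub_cancel_right]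
    push_cast
    field_simp
  have hlim : Tendsto (fun y : ℝ => ((y : ℂ) + I) ^ (a + 1) / (a + 1)) (atBot ⊔ atTop) (𝓝 0) := by
    rw [← zero_div ((a : ℂ) + 1)]
    refine (tendsto_zero_iff_norm_tendsto_zero.mpr ?_).div_const _
    simp_rw [norm_zpow]
    exact (tendsto_zpow_atTop_zero (by omega)).comp tendsto_norm_ofReal_add_I
  rw [integral_of_hasDerivAt_of_tendsto hderiv (integrable_W (by omega))
    (hlim.mono_left le_sup_left) (hlim.mono_left le_sup_right), sub_zero]

lemma integral_W_swap (a b : ℤ) : ∫ x, W b a x = conj (∫ x, W a b x) := by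
  simp_rw [← integral_conj, conj_W]

lemma W_add_one_left (a b : ℤ) (x : ℝ) : W (a + 1) b x = W a (b + 1) x + 2 * I * W a b x := by
  simp only [W, zpow_add_one₀ (ofReal_add_I_ne_zero x), zpow_add_one₀ (ofReal_sub_I_ne_zero x)]
  ring

lemma integral_W_add_one_left {a b : ℤ} (hab : a + b ≤ -3) :
    ∫ x, W (a + 1) b x = (∫ x, W a (b + 1) x) + 2 * I * ∫ x, W a b x := by
  simp_rw [W_add_one_left]
  rw [integral_add (integrable_W (by omega)) ((integrable_W (by omega)).const_mul _),
    integral_const_mul]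

lemma integral_W_eq_zero_of_nonneg_left {a b : ℤ} (hab : a + b ≤ -2) (ha : 0 ≤ a) :
    ∫ x, W a b x = 0 := by
  induction a, ha using Int.leInduction generalizing b with
  | base => rw [integral_W_swap, integral_W_zero_right (by omega), map_zero]
  | succ a ha ih =>
    rw [integral_W_add_one_left (by omega), ih (b := b + 1) (by omega), ih (by omega), mul_zero,
      add_zero]

lemma integral_W_eq_zero {a b : ℤ} (hab : a + b ≤ -2) (h : 0 ≤ a ∨ 0 ≤ b) :
    ∫ x, W a b x = 0 := by
  rcases h with ha | hb
  · exact integral_W_eq_zero_of_nonneg_left hab ha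
  · rw [integral_W_swap, integral_W_eq_zero_of_nonneg_left (by omega) hb, map_zero]

lemma integral_W_neg_one_neg_one : ∫ x, W (-1) (-1) x = π := by
  have : W (-1) (-1) = fun x : ℝ => (((1 + x ^ 2)⁻¹ : ℝ) : ℂ) := by
    ext x; rw [← zpow_neg_one, ofReal_one_add_sq_zpow]
  rw [this]
  exact integral_ofReal.trans (congrArg _ integral_univ_inv_one_add_sq)

lemma integral_W_neg_one_right {a : ℤ} (ha : a ≤ -1) :
    ∫ x, W a (-1) x = π * (2 * I) ^ (a + 1) := by
  induction a, ha using Int.leInductionDown with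
  | base => simp [integral_W_neg_one_neg_one]
  | pred a ha ih =>
    have h2I : 2 * I ≠ 0 := by simp
    have := integral_W_add_one_left (a := a - 1) (b := -1) (by omega)
    rw [sub_add_cancel, ih, neg_add_cancel, integral_W_zero_right (a := a - 1) (by omega),
      zero_add] at this
    rw [sub_add_cancel, eq_comm, ← mul_right_inj' h2I, ← this, zpow_add_one₀ h2I]
    ring

lemma integral_W_neg_one_left {b : ℤ} (hb : b ≤ -1) :
    ∫ x, W (-1) b x = π * (-(2 * I)) ^ (b + 1) := by
  rw [integral_W_swap, integral_W_neg_one_right hb]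
  simp [map_zpow₀, map_ofNat]

lemma eval_eq_sum_taylor (q : ℂ[X]) (c z : ℂ) :
    q.eval z = ∑ t ∈ range (q.natDegree + 1), (taylor c q).coeff t * (z - c) ^ t := by
  rw [← taylor_eval_sub c, eval_eq_sum_range, natDegree_taylor]

lemma eval_mul_W_eq_sum_left (q : ℂ[X]) (a b : ℤ) (x : ℝ) :
    q.eval (x : ℂ) * W a b x =
      ∑ t ∈ range (q.natDegree + 1), (taylor (-I) q).coeff t * W (a + t) b x := by
  rw [eval_eq_sum_taylor q (-I), sum_mul]
  refine sum_congr rfl fun t _ => ?_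
  simp only [W, sub_neg_eq_add, zpow_add₀ (ofReal_add_I_ne_zero x), zpow_natCast]
  ring

lemma eval_mul_W_eq_sum_right (q : ℂ[X]) (a b : ℤ) (x : ℝ) :
    q.eval (x : ℂ) * W a b x =
      ∑ t ∈ range (q.natDegree + 1), (taylor I q).coeff t * W a (b + t) x := by
  rw [eval_eq_sum_taylor q I, sum_mul]
  refine sum_congr rfl fun t _ => ?_
  simp only [W, zpow_add₀ (ofReal_sub_I_ne_zero x), zpow_natCast]
  ring

lemma integrable_eval_mul_W (q : ℂ[X]) {a b : ℤ} (hab : q.natDegree + a + b ≤ -2) :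
    Integrable fun x : ℝ => q.eval (x : ℂ) * W a b x := by
  simp_rw [eval_mul_W_eq_sum_left]
  exact integrable_finsetSum _ fun t ht =>
    (integrable_W (by simp only [mem_range] at ht; omega)).const_mul _

lemma integral_eval_mul_W_left (q : ℂ[X]) {a b : ℤ} (hab : q.natDegree + a + b ≤ -2) :
    ∫ x : ℝ, q.eval (x : ℂ) * W a b x =
      ∑ t ∈ range (q.natDegree + 1), (taylor (-I) q).coeff t * ∫ x, W (a + t) b x := by
  simp_rw [eval_mul_W_eq_sum_left]
  rw [integral_finsetSum _ fun t ht =>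
    (integrable_W (by simp only [mem_range] at ht; omega)).const_mul _]
  simp_rw [integral_const_mul]

lemma integral_eval_mul_W_right (q : ℂ[X]) {a b : ℤ} (hab : q.natDegree + a + b ≤ -2) :
    ∫ x : ℝ, q.eval (x : ℂ) * W a b x =
      ∑ t ∈ range (q.natDegree + 1), (taylor I q).coeff t * ∫ x, W a (b + t) x := by
  simp_rw [eval_mul_W_eq_sum_right]
  rw [integral_finsetSum _ fun t ht =>
    (integrable_W (by simp only [mem_range] at ht; omega)).const_mul _]
  simp_rw [integral_const_mul]

lemma integral_eval_mul_W_eq_zero (q : ℂ[X]) {a b : ℤ} (hab : q.natDegree + a + b ≤ -2)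
    (h : 0 ≤ a ∨ 0 ≤ b) : ∫ x : ℝ, q.eval (x : ℂ) * W a b x = 0 := by
  rw [integral_eval_mul_W_left q hab]
  refine sum_eq_zero fun t ht => ?_
  rw [integral_W_eq_zero (by simp only [mem_range] at ht; omega) (by omega), mul_zero]

lemma integral_eval_mul_W_neg_one_left (q : ℂ[X]) {E : ℤ} (hq : q.natDegree ≤ E) :
    ∫ x : ℝ, q.eval (x : ℂ) * W (-1) (-1 - E) x = π * (-(2 * I)) ^ (-E) * q.eval (-I) := by
  rw [integral_eval_mul_W_left q (by omega), sum_eq_single_of_mem 0 (by simp)]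
  · rw [taylor_coeff_zero, Nat.cast_zero, add_zero, integral_W_neg_one_left (by omega),
      show -1 - E + 1 = -E by ring]
    ring
  · intro t ht ht0
    rw [integral_W_eq_zero (by simp only [mem_range] at ht; omega) (.inl (by omega)), mul_zero]

lemma integral_eval_mul_W_neg_one_right (q : ℂ[X]) {E : ℤ} (hq : q.natDegree ≤ E) :
    ∫ x : ℝ, q.eval (x : ℂ) * W (-1 - E) (-1) x = π * (2 * I) ^ (-E) * q.eval I := by
  rw [integral_eval_mul_W_right q (by omega), sum_eq_single_of_mem 0 (by simp)]
  · rw [taylor_coeff_zero, Nat.cast_zero, add_zero, integral_W_neg_one_right (by omega),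
      show -1 - E + 1 = -E by ring]
    ring
  · intro t ht ht0
    rw [integral_W_eq_zero (by simp only [mem_range] at ht; omega) (.inr (by omega)), mul_zero]

noncomputable def leibnizCoeff (a b : ℤ) (m j : ℕ) : ℂ :=
  m.choose j * (∏ i ∈ range j, ((a : ℂ) - i)) * ∏ i ∈ range (m - j), ((b : ℂ) - i)

lemma iteratedDeriv_W (a b : ℤ) (m : ℕ) (x : ℝ) :
    iteratedDeriv m (W a b) x =
      ∑ j ∈ range (m + 1), leibnizCoeff a b m j * W (a - j) (b - (m - j : ℕ)) x := by
  rw [W_eq_mul a b, iteratedDeriv_mul (contDiff_ofReal_add_zpow (by simp) a).contDiffAt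
    (contDiff_ofReal_add_zpow (by simp) b).contDiffAt]
  refine sum_congr rfl fun j _ => ?_
  rw [iteratedDeriv_ofReal_add_zpow (by simp), iteratedDeriv_ofReal_add_zpow (by simp)]
  simp only [W, leibnizCoeff, sub_eq_add_neg]
  ring

lemma psi_eq_W (k n : ℤ) : psi k n = W (-(k + 1) - n) n := by
  ext x
  simp only [psi, W, div_zpow, zpow_sub₀ (ofReal_add_I_ne_zero x)]
  ring

lemma ntilde_eq (k : ℤ) (n : ℕ) : ntilde k n =
    (-k - 1) / 2 + (if Even ((n : ℤ) + k + 1) then 1 else -1) * (((n : ℤ) + 1) / 2) := by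
  have h (z : ℤ) : ⌊(z : ℚ) / 2⌋ = z / 2 := by exact_mod_cast Rat.floor_intCast_div_natCast z 2
  rw [ntilde, ← h, ← h]
  push_cast
  rfl

lemma two_mul_ntilde_of_even {k : ℤ} {n : ℕ} (h : ((n : ℤ) + k) % 2 = 0) :
    2 * ntilde k n = -((n : ℤ) + k + 2) := by
  rw [ntilde_eq, if_neg (by rw [Int.not_even_iff]; omega)]
  omega

lemma two_mul_ntilde_of_odd {k : ℤ} {n : ℕ} (h : ((n : ℤ) + k) % 2 = 1) :
    2 * ntilde k n = n - k - 1 := by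
  rw [ntilde_eq, if_pos (by rw [Int.even_iff]; omega)]
  omega

lemma ebasis_eq (k : ℤ) (n : ℕ) :
    ebasis k n = fun x => ((√π)⁻¹ : ℝ) * W (-(k + 1) - ntilde k n) (ntilde k n) x := by
  ext x
  rw [ebasis, psi_eq_W]

lemma iterate_deriv_ebasis (k : ℤ) (n m : ℕ) (x : ℝ) :
    deriv^[m] (ebasis k n) x =
      ((√π)⁻¹ : ℝ) * iteratedDeriv m (W (-(k + 1) - ntilde k n) (ntilde k n)) x := by
  rw [← iteratedDeriv_eq_iterate, ebasis_eq, iteratedDeriv_const_mul _ (contDiff_W _ _).contDiffAt]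

lemma conj_ebasis_mul_weight (k : ℤ) (n : ℕ) (x : ℝ) :
    conj (ebasis k n x) * (((x ^ 2 + 1) ^ k : ℝ) : ℂ) =
      ((√π)⁻¹ : ℝ) * W (ntilde k n + k) (-1 - ntilde k n) x := by
  rw [ebasis_eq, map_mul, conj_ofReal, conj_W, add_comm (x ^ 2), ofReal_one_add_sq_zpow, mul_assoc,
    W_mul_W]
  congr 2
  ring

lemma Pop_ebasis_mul_conj_ebasis_mul_weight (M : ℕ) (p : ℕ → ℂ[X]) (k₀ kd : ℤ) (n' n : ℕ)
    {a₀ b₀ : ℤ} (ha : a₀ = -(k₀ + 1) - ntilde k₀ n + ntilde kd n' + kd)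
    (hb : b₀ = ntilde k₀ n - 1 - ntilde kd n') (x : ℝ) :
    Pop M p (ebasis k₀ n) x * conj (ebasis kd n' x) * (((x ^ 2 + 1) ^ kd : ℝ) : ℂ) =
      (π : ℂ)⁻¹ * ∑ m ∈ range (M + 1), ∑ j ∈ range (m + 1),
        leibnizCoeff (-(k₀ + 1) - ntilde k₀ n) (ntilde k₀ n) m j *
          ((p m).eval (x : ℂ) * W (a₀ - j) (b₀ - (m - j : ℕ)) x) := by
  have hπ : (π : ℂ)⁻¹ = ((√π)⁻¹ : ℝ) * ((√π)⁻¹ : ℝ) := by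
    rw [← ofReal_mul, ← mul_inv, Real.mul_self_sqrt pi_pos.le, ofReal_inv]
  rw [mul_assoc, conj_ebasis_mul_weight, Pop, sum_mul, mul_sum]
  refine sum_congr rfl fun m _ => ?_
  rw [iterate_deriv_ebasis, iteratedDeriv_W, mul_sum, mul_sum, sum_mul, mul_sum]
  refine sum_congr rfl fun j _ => ?_
  rw [hπ, show W (a₀ - j) (b₀ - (m - j : ℕ)) x =
    W (-(k₀ + 1) - ntilde k₀ n - j + (ntilde kd n' + kd))
      (ntilde k₀ n - (m - j : ℕ) + (-1 - ntilde kd n')) x by congr 1 <;> omega, ← W_mul_W]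
  ring

lemma bmat_eq_sum (M : ℕ) (p : ℕ → ℂ[X]) (k₀ kd : ℤ) (n' n : ℕ)
    (hdeg : ∀ m ≤ M, ((p m).natDegree : ℤ) ≤ m + (k₀ - kd))
    {a₀ b₀ : ℤ} (ha : a₀ = -(k₀ + 1) - ntilde k₀ n + ntilde kd n' + kd)
    (hb : b₀ = ntilde k₀ n - 1 - ntilde kd n') :
    bmat M p k₀ kd n' n = (π : ℂ)⁻¹ * ∑ m ∈ range (M + 1), ∑ j ∈ range (m + 1),
      leibnizCoeff (-(k₀ + 1) - ntilde k₀ n) (ntilde k₀ n) m j *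
        ∫ x : ℝ, (p m).eval (x : ℂ) * W (a₀ - j) (b₀ - (m - j : ℕ)) x := by
  have hint : ∀ m ∈ range (M + 1), ∀ j ∈ range (m + 1), Integrable fun x : ℝ =>
      leibnizCoeff (-(k₀ + 1) - ntilde k₀ n) (ntilde k₀ n) m j *
        ((p m).eval (x : ℂ) * W (a₀ - j) (b₀ - (m - j : ℕ)) x) := fun m hm j hj => by
    simp only [mem_range] at hm hj
    have := hdeg m (by omega)
    exact (integrable_eval_mul_W _ (by omega)).const_mul _
  simp_rw [bmat, Pop_ebasis_mul_conj_ebasis_mul_weight M p k₀ kd n' n ha hb]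
  rw [integral_const_mul, integral_finsetSum _ fun m hm => integrable_finsetSum _ (hint m hm)]
  congr 1
  refine sum_congr rfl fun m hm => ?_
  rw [integral_finsetSum _ (hint m hm)]
  simp_rw [integral_const_mul]

lemma sum_sum_integral_eval_mul_W_eq_left (M : ℕ) (p : ℕ → ℂ[X]) (f : ℕ → ℕ → ℂ) {e : ℤ}
    (hdeg : ∀ m ≤ M, ((p m).natDegree : ℤ) ≤ m + e) :
    ∑ m ∈ range (M + 1), ∑ j ∈ range (m + 1),
        f m j * ∫ x : ℝ, (p m).eval (x : ℂ) * W (M - 1 - j) (-1 - (M + e) - (m - j : ℕ)) x =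
      f M M * (π * (-(2 * I)) ^ (-(M + e)) * (p M).eval (-I)) := by
  have hzero : ∀ m ∈ range (M + 1), ∀ j ∈ range (m + 1), j ≠ M →
      ∫ x : ℝ, (p m).eval (x : ℂ) * W (M - 1 - j) (-1 - (M + e) - (m - j : ℕ)) x = 0 :=
      fun m hm j hj hjM => by
    simp only [mem_range] at hm hj
    have := hdeg m (by omega)
    exact integral_eval_mul_W_eq_zero _ (by omega) (.inl (by omega))
  rw [sum_eq_single_of_mem M (self_mem_range_succ M),
    sum_eq_single_of_mem M (self_mem_range_succ M)]
  · rw [show (M : ℤ) - 1 - M = -1 by omega, Nat.sub_self, Nat.cast_zero, sub_zero,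
      integral_eval_mul_W_neg_one_left _ (hdeg M le_rfl)]
  · exact fun j hj hjM => by rw [hzero M (self_mem_range_succ M) j hj hjM, mul_zero]
  · refine fun m hm hmM => sum_eq_zero fun j hj => ?_
    rw [hzero m hm j hj (by simp only [mem_range] at hm hj; omega), mul_zero]

lemma sum_sum_integral_eval_mul_W_eq_right (M : ℕ) (p : ℕ → ℂ[X]) (f : ℕ → ℕ → ℂ) {e : ℤ}
    (hdeg : ∀ m ≤ M, ((p m).natDegree : ℤ) ≤ m + e) :
    ∑ m ∈ range (M + 1), ∑ j ∈ range (m + 1),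
        f m j * ∫ x : ℝ, (p m).eval (x : ℂ) * W (-1 - (M + e) - j) (M - 1 - (m - j : ℕ)) x =
      f M 0 * (π * (2 * I) ^ (-(M + e)) * (p M).eval I) := by
  have hzero : ∀ m ∈ range (M + 1), ∀ j ∈ range (m + 1), m ≠ M ∨ j ≠ 0 →
      ∫ x : ℝ, (p m).eval (x : ℂ) * W (-1 - (M + e) - j) (M - 1 - (m - j : ℕ)) x = 0 :=
      fun m hm j hj hmj => by
    simp only [mem_range] at hm hj
    have := hdeg m (by omega)
    exact integral_eval_mul_W_eq_zero _ (by omega) (.inr (by omega))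
  rw [sum_eq_single_of_mem M (self_mem_range_succ M), sum_eq_single_of_mem 0 (by simp)]
  · rw [Nat.cast_zero, sub_zero, Nat.sub_zero, show (M : ℤ) - 1 - M = -1 by omega,
      integral_eval_mul_W_neg_one_right _ (hdeg M le_rfl)]
  · exact fun j hj hj0 => by rw [hzero M (self_mem_range_succ M) j hj (.inr hj0), mul_zero]
  · exact fun m hm hmM => sum_eq_zero fun j hj => by rw [hzero m hm j hj (.inl hmM), mul_zero]

lemma natDegree_le_of_s0_le {M : ℕ} {p : ℕ → ℂ[X]} {e : ℤ} (h : s0 M p ≤ e) {m : ℕ} (hm : m ≤ M) :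
    ((p m).natDegree : ℤ) ≤ m + e := by
  have := le_sup' (fun m => ((p m).natDegree : ℤ) - m) (mem_range.mpr (by omega : m < M + 1))
  rw [s0] at h
  omega

lemma leibnizCoeff_self_ne_zero {a : ℤ} {M : ℕ} (b : ℤ) (h : (M : ℤ) ≤ a) :
    leibnizCoeff a b M M ≠ 0 := by
  simp only [leibnizCoeff, Nat.choose_self, Nat.sub_self, prod_range_zero, mul_one, Nat.cast_one,
    one_mul, prod_ne_zero_iff, mem_range]
  exact fun i hi => by exact_mod_cast (by omega : a - i ≠ 0)

lemma leibnizCoeff_zero_ne_zero (a : ℤ) {b : ℤ} {M : ℕ} (h : (M : ℤ) ≤ b) :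
    leibnizCoeff a b M 0 ≠ 0 := by
  simp only [leibnizCoeff, Nat.choose_zero_right, Nat.sub_zero, prod_range_zero, mul_one,
    Nat.cast_one, one_mul, prod_ne_zero_iff, mem_range]
  exact fun i hi => by exact_mod_cast (by omega : b - i ≠ 0)

theorem stmt12_general (M : ℕ) (p : ℕ → Polynomial ℂ)
    (k₀ : ℤ) (kd : ℤ) (hkd : kd ≤ k₀ - s0 M p)
    (hpI : (p M).eval Complex.I ≠ 0) (hpI' : (p M).eval (-Complex.I) ≠ 0) :
    ∀ r : ℕ, 2 * (M : ℤ) + k₀ + max (-kd) 0 ≤ (r : ℤ) →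
      bmat M p k₀ kd ((r : ℤ) - (2 * (M : ℤ) + k₀ - kd)).toNat r ≠ 0 := by
  intro r hr
  obtain ⟨n', hn'⟩ : ∃ n' : ℕ, ((r : ℤ) - (2 * M + k₀ - kd)).toNat = n' := ⟨_, rfl⟩
  rw [hn']
  have hdeg m (hm : m ≤ M) := natDegree_le_of_s0_le (p := p) (e := k₀ - kd) (by omega) hm
  have hmax := le_max_left (-kd) 0
  rcases Int.emod_two_eq_zero_or_one ((r : ℤ) + k₀) with hpar | hpar
  · have hN := two_mul_ntilde_of_even hpar
    have hB := two_mul_ntilde_of_even (k := kd) (n := n') (by omega)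
    rw [bmat_eq_sum M p k₀ kd n' r hdeg (a₀ := M - 1) (b₀ := -1 - (M + (k₀ - kd))) (by omega)
      (by omega), sum_sum_integral_eval_mul_W_eq_left M p _ hdeg]
    have := leibnizCoeff_self_ne_zero (ntilde k₀ r) (M := M) (a := -(k₀ + 1) - ntilde k₀ r)
      (by omega)
    exact mul_ne_zero (by simp [pi_ne_zero])
      (mul_ne_zero this (by simp [hpI', pi_ne_zero, zpow_ne_zero]))
  · have hN := two_mul_ntilde_of_odd hpar
    have hB := two_mul_ntilde_of_odd (k := kd) (n := n') (by omega)
    rw [bmat_eq_sum M p k₀ kd n' r hdeg (a₀ := -1 - (M + (k₀ - kd))) (b₀ := M - 1) (by omega)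
      (by omega), sum_sum_integral_eval_mul_W_eq_right M p _ hdeg]
    have := leibnizCoeff_zero_ne_zero (-(k₀ + 1) - ntilde k₀ r) (M := M) (b := ntilde k₀ r)
      (by omega)
    exact mul_ne_zero (by simp [pi_ne_zero])
      (mul_ne_zero this (by simp [hpI, pi_ne_zero, zpow_ne_zero]))

/-- In the band-matrix setup (polynomial coefficients `p_0, …, p_M`
with `p_M ≠ 0`, integer `k₀ ≥ 0` and `k₀◊ ≤ k₀ - s₀`), assume moreover that
`p_M(i) ≠ 0` and `p_M(-i) ≠ 0`.  Then `b_{r-(2M+k₀-k₀◊)}^{r} ≠ 0` for every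
`r ≥ 2M + k₀ + max (-k₀◊) 0`. -/
theorem stmt12 (M : ℕ) (hM : 1 ≤ M) (p : ℕ → Polynomial ℂ) (hpM : p M ≠ 0)
    (k₀ : ℤ) (hk₀ : 0 ≤ k₀) (kd : ℤ) (hkd : kd ≤ k₀ - s0 M p)
    (hpI : (p M).eval Complex.I ≠ 0) (hpI' : (p M).eval (-Complex.I) ≠ 0) :
    ∀ r : ℕ, 2 * (M : ℤ) + k₀ + max (-kd) 0 ≤ (r : ℤ) →
      bmat M p k₀ kd ((r : ℤ) - (2 * (M : ℤ) + k₀ - kd)).toNat r ≠ 0 :=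
  stmt12_general M p k₀ kd hkd hpI hpI'
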